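/- Let f : (A₊)^k → ℂ be multiplicative (k ≥ 1) with Σ over all tuples (G₁,…,G_k) ∈ (A₊)^k of |(μ_k ∗ f)(G₁,…,G_k)| / (|G₁|⋯|G_k|) finite. Then for every (H₁,…,H_k) ∈ (A₊)^k the Ramanujan coefficient C_{H₁,…,H_k} = Σ_{M₁,…,M_k ∈ A₊} (μ_k ∗ f)(M₁H₁,…,M_kH_k) / (|M₁H₁|⋯|M_kH_k|) equals the product over all monic irreducible P of Σ over integers e₁ ≥ ν_P(H₁), …, e_k ≥ ν_P(H_k) of (μ_k ∗ f)(P^{e₁},…,P^{e_k}) / |P|^{e₁+⋯+e_k}, where ν_P denotes the exact exponent of P. -/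

import Mathlib

open Polynomial UniqueFactorizationMonoid

variable (p : ℕ) [Fact p.Prime] (F : Type) [Field F] [Fintype F] [DecidableEq F]
  [Algebra (ZMod p) F]

/-- The absolute value `|G| = q ^ deg G` of a polynomial over `𝔽_q`. -/
def anorm (G : Polynomial F) : ℕ := Fintype.card F ^ G.natDegree

/-- `t_H(A')`: the coefficient of `T^(m-1)` in the remainder of `A'` upon division by `H`,
where `m = deg H`. -/
noncomputable def tmap (H A' : Polynomial F) : F := (A' % H).coeff (H.natDegree - 1)

/-- The additive character `E(G,H)(D) = exp(2πi · tr(t_H(G·D)) / p)`. -/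
noncomputable def echar (G H D : Polynomial F) : ℂ :=
  Complex.exp (2 * Real.pi * Complex.I *
    ((Algebra.trace (ZMod p) F (tmap F H (G * D))).val : ℂ) / (p : ℂ))

open scoped Classical in
/-- `ω(G)`: the number of distinct monic irreducible divisors of `G`. -/
noncomputable def omega (G : Polynomial F) : ℕ := (normalizedFactors G).toFinset.card

open scoped Classical in
/-- The Möbius function on `𝔽_q[T]`. -/
noncomputable def mu (G : Polynomial F) : ℤ :=
  if Squarefree G then (-1) ^ omega F G else 0

/-- The polynomial Ramanujan sum `η(G,H)`: the sum of `E(G,H)(D)` over a complete residue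
system `D` modulo `H` with `(D,H) = 1`. -/
noncomputable def eta (G H : Polynomial F) : ℂ :=
  ∑' D : {D : Polynomial F // D.degree < H.degree ∧ IsCoprime D H}, echar p F G H D.1

open scoped Classical in
/-- The unitary gcd `(G,H)_*`: the monic polynomial of highest degree dividing `G` and
unitarily dividing `H`. -/
noncomputable def ugcd (G H : Polynomial F) : Polynomial F :=
  ∏ P ∈ (normalizedFactors H).toFinset,
    if P ^ (normalizedFactors H).count P ∣ G then P ^ (normalizedFactors H).count P else 1

/-- `μ*(G) = (-1)^(ω(G))`. -/
noncomputable def muStar (G : Polynomial F) : ℤ := (-1) ^ omega F G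

/-- The unitary polynomial Ramanujan sum `η*(G,H)`: the sum of `E(G,H)(D)` over a complete
residue system `D` modulo `H` with `(D,H)_* = 1`. -/
noncomputable def etaStar (G H : Polynomial F) : ℂ :=
  ∑' D : {D : Polynomial F // D.degree < H.degree ∧ ugcd F D H = 1}, echar p F G H D.1

/-- The Dirichlet convolution of `μ_k` with `f` on `k`-tuples of monic polynomials:
`(μ_k ∗ f)(G₁,…,G_k) = Σ_{D_i E_i = G_i, D_i,E_i monic} μ(D₁)⋯μ(D_k) · f(E₁,…,E_k)`. -/
noncomputable def muConv {k : ℕ} (f : (Fin k → Polynomial F) → ℂ)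
    (G : Fin k → Polynomial F) : ℂ :=
  ∑' DE : {DE : (Fin k → Polynomial F) × (Fin k → Polynomial F) //
      (∀ i, (DE.1 i).Monic) ∧ (∀ i, (DE.2 i).Monic) ∧ ∀ i, DE.1 i * DE.2 i = G i},
    (∏ i, (mu F (DE.1.1 i) : ℂ)) * f DE.1.2

open scoped Classical in
/-- `ν_P(G)`: the exact exponent of `P` in `G`. -/
noncomputable def nuP (P G : Polynomial F) : ℕ := (normalizedFactors G).count P

/-!
Unique factorization identifies monic `k`-tuples with finitely supported maps
`P ↦ (ν_P(G₁), …, ν_P(G_k))` on monic irreducibles, and `M ↦ MH` shifts these exponents by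
those of `H`. Since `μ_k ∗ f` is again multiplicative and `|·|` is completely multiplicative,
`h(G) = (μ_k ∗ f)(G) / (|G₁|⋯|G_k|)` is the product of its values at the prime-power parts of
`G`. So the summand at `M` is a product of local factors, equal to `1` at every `P` dividing
neither `M` nor `H`, and absolute convergence lets the sum over all finitely supported exponent
maps be regrouped as the product over `P` of the local sums.
-/

open Filter Topology

section EulerProduct

variable {ι β : Type*} [Zero β] [DecidableEq ι]

noncomputable def Finsupp.supportSubsetConsEquiv (a : ι) (T : Finset ι) (ha : a ∉ T) :
    β × {σ : ι →₀ β // σ.support ⊆ T} ≃ {σ : ι →₀ β // σ.support ⊆ Finset.cons a T ha} where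
  toFun x := ⟨x.2.1.update a x.1, (Finsupp.support_update_subset _ _).trans <| by
    simpa only [Finset.cons_eq_insert] using Finset.insert_subset_insert a x.2.2⟩
  invFun σ := (σ.1 a, ⟨σ.1.erase a, by
    simpa only [Finsupp.support_erase, Finset.cons_eq_insert, Finset.subset_insert_iff] using σ.2⟩)
  left_inv x := by
    obtain ⟨b, σ, hσ⟩ := x
    have hσa : a ∉ σ.support := fun h => ha (hσ h)
    simp [Finsupp.update_apply, Finsupp.erase_of_notMem_support hσa]
  right_inv σ := Subtype.ext (by simp)

theorem Finsupp.prod_cons_supportSubsetConsEquiv {M : Type*} [CommMonoid M] (c : ι → β → M)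
    (a : ι) (T : Finset ι) (ha : a ∉ T) (x : β × {σ : ι →₀ β // σ.support ⊆ T}) :
    ∏ i ∈ Finset.cons a T ha, c i ((supportSubsetConsEquiv a T ha x).1 i) =
      c a x.1 * ∏ i ∈ T, c i (x.2.1 i) := by
  rw [Finset.prod_cons]
  congr 1
  · simp [supportSubsetConsEquiv]
  · refine Finset.prod_congr rfl fun i hi => ?_
    simp [supportSubsetConsEquiv, Finsupp.update_apply, show i ≠ a by rintro rfl; exact ha hi]

variable {R : Type*} [NormedField R] [CompleteSpace R]

theorem Finset.summable_and_prod_tsum_eq_tsum_finsupp {c : ι → β → R}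
    (hc : ∀ i, Summable fun b => ‖c i b‖) (T : Finset ι) :
    (Summable fun σ : {σ : ι →₀ β // σ.support ⊆ T} => ‖∏ i ∈ T, c i (σ.1 i)‖) ∧
      ∏ i ∈ T, ∑' b, c i b = ∑' σ : {σ : ι →₀ β // σ.support ⊆ T}, ∏ i ∈ T, c i (σ.1 i) := by
  induction T using Finset.cons_induction with
  | empty =>
    have : Subsingleton {σ : ι →₀ β // σ.support ⊆ ∅} :=
      ⟨fun σ τ => Subtype.ext <| by
        rw [Finsupp.support_eq_empty.1 (Finset.subset_empty.1 σ.2),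
          Finsupp.support_eq_empty.1 (Finset.subset_empty.1 τ.2)]⟩
    refine ⟨.of_finite, ?_⟩
    rw [tsum_eq_single ⟨0, by simp⟩ fun σ hσ => absurd (Subsingleton.elim _ _) hσ]
    simp
  | cons a T ha ih =>
    obtain ⟨hsum, hprod⟩ := ih
    let e := Finsupp.supportSubsetConsEquiv (β := β) a T ha
    have hnorm : ∀ x, ‖∏ i ∈ Finset.cons a T ha, c i ((e x).1 i)‖ =
        ‖c a x.1‖ * ‖∏ i ∈ T, c i (x.2.1 i)‖ := fun x => by
      rw [Finsupp.prod_cons_supportSubsetConsEquiv, norm_mul]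
    refine ⟨?_, ?_⟩
    · refine e.summable_iff.1 ?_
      simpa only [Function.comp_def, hnorm] using
        (hc a).mul_of_nonneg hsum (fun _ => norm_nonneg _) (fun _ => norm_nonneg _)
    · rw [Finset.prod_cons, hprod, tsum_mul_tsum_of_summable_norm (hc a) hsum, ← e.tsum_eq]
      simp only [e, Finsupp.prod_cons_supportSubsetConsEquiv]

theorem tendsto_tsum_support_subset {G : Type*} [AddCommGroup G] [UniformSpace G]
    [IsUniformAddGroup G] [CompleteSpace G] [T2Space G] {g : (ι →₀ β) → G} (hg : Summable g) :
    Tendsto (fun T : Finset ι => ∑' σ : {σ : ι →₀ β // σ.support ⊆ T}, g σ) atTop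
      (𝓝 (∑' σ, g σ)) := by
  have hcompl : Tendsto (fun T : Finset ι => ∑' σ : ↥{σ : ι →₀ β | σ.support ⊆ T}ᶜ, g σ) atTop
      (𝓝 0) := by
    intro e he
    obtain ⟨s, hs⟩ := hg.tsum_vanishing he
    refine mem_atTop_sets.2 ⟨s.biUnion Finsupp.support, fun T hT => hs _ ?_⟩
    refine Set.disjoint_left.2 fun σ hσT hσs => hσT ?_
    exact (Finset.subset_biUnion_of_mem _ hσs).trans hT
  have hlim := (tendsto_const_nhds (x := ∑' σ, g σ)).sub hcompl
  rw [sub_zero] at hlim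
  refine hlim.congr fun T => ?_
  rw [← hg.tsum_subtype_add_tsum_subtype_compl {σ | σ.support ⊆ T}, add_sub_cancel_right]
  rfl

theorem hasProd_tsum_of_summable_finsupp {c : ι → β → R} {S : Finset ι}
    (hc0 : ∀ i ∉ S, c i 0 = 1) (hc : ∀ i, Summable fun b => ‖c i b‖)
    (hsum : Summable fun σ : ι →₀ β => ∏ i ∈ S ∪ σ.support, c i (σ i)) :
    HasProd (fun i => ∑' b, c i b) (∑' σ : ι →₀ β, ∏ i ∈ S ∪ σ.support, c i (σ i)) := by
  refine (tendsto_tsum_support_subset hsum).congr' ?_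
  filter_upwards [eventually_ge_atTop S] with T hST
  rw [(Finset.summable_and_prod_tsum_eq_tsum_finsupp hc T).2]
  refine tsum_congr fun σ => Finset.prod_subset (Finset.union_subset hST σ.2) fun i _ hi => ?_
  rw [Finsupp.notMem_support_iff.1 fun h => hi (Finset.mem_union_right _ h),
    hc0 i fun h => hi (Finset.mem_union_left _ h)]

end EulerProduct

def addRightEquivSubtypeLe {ι : Type*} (ν : ι → ℕ) :
    (ι → ℕ) ≃ {e : ι → ℕ // ∀ i, ν i ≤ e i} where
  toFun e := ⟨e + ν, fun _ => Nat.le_add_left _ _⟩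
  invFun e := e.1 - ν
  left_inv e := funext fun i => Nat.add_sub_cancel_right (e i) (ν i)
  right_inv e := Subtype.ext <| funext fun i => Nat.sub_add_cancel (e.2 i)

abbrev MonicIrreducible (K : Type) [Field K] := {P : K[X] // P.Monic ∧ Irreducible P}

namespace MonicIrreducible

variable {K : Type} [Field K]

theorem isCoprime {P Q : MonicIrreducible K} (h : P ≠ Q) : IsCoprime P.1 Q.1 :=
  P.2.2.coprime_iff_not_dvd.2 fun hd => h <| Subtype.ext <|
    eq_of_monic_of_associated P.2.1 Q.2.1 (P.2.2.associated_of_dvd Q.2.2 hd)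

theorem natDegree_ne_zero (P : MonicIrreducible K) : P.1.natDegree ≠ 0 := fun h =>
  P.2.2.not_isUnit (P.2.1.natDegree_eq_zero.1 h ▸ isUnit_one)

end MonicIrreducible

section Valuation

variable {K : Type} [Field K] [DecidableEq K]

theorem monic_and_irreducible_of_mem_normalizedFactors {G Q : K[X]} (hQ : Q ∈ normalizedFactors G) :
    Q.Monic ∧ Irreducible Q := by
  have hG : G ≠ 0 := by rintro rfl; simp at hQ
  obtain ⟨hirr, hmonic, -⟩ := (Polynomial.mem_normalizedFactors_iff hG).1 hQ
  exact ⟨hmonic, hirr⟩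

theorem nuP_mul (P : K[X]) {A B : K[X]} (hA : A ≠ 0) (hB : B ≠ 0) :
    nuP K P (A * B) = nuP K P A + nuP K P B := by
  simp only [nuP, normalizedFactors_mul hA hB, Multiset.count_add]

theorem nuP_pow (P Q : MonicIrreducible K) (n : ℕ) :
    nuP K P.1 (Q.1 ^ n) = if P = Q then n else 0 := by
  simp only [nuP, normalizedFactors_of_irreducible_pow Q.2.2, Q.2.1.normalize_eq_self,
    Multiset.count_replicate, Subtype.ext_iff, eq_comm]

theorem nuP_prod_pow (T : Finset (MonicIrreducible K)) (e : MonicIrreducible K → ℕ)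
    (P : MonicIrreducible K) :
    nuP K P.1 (∏ Q ∈ T, Q.1 ^ e Q) = if P ∈ T then e P else 0 := by
  induction T using Finset.cons_induction with
  | empty => simp [nuP]
  | cons Q T hQ ih =>
    rw [Finset.prod_cons, nuP_mul _ (pow_ne_zero _ Q.2.1.ne_zero)
      (Finset.prod_ne_zero_iff.2 fun R _ => pow_ne_zero _ R.2.1.ne_zero), ih, nuP_pow]
    by_cases h : P = Q
    · subst h; simp [hQ]
    · simp [h]

theorem Polynomial.Monic.eq_of_nuP_eq {A B : K[X]} (hA : A.Monic) (hB : B.Monic)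
    (h : ∀ P : MonicIrreducible K, nuP K P.1 A = nuP K P.1 B) : A = B := by
  refine eq_of_monic_of_associated hA hB <|
    (associated_iff_normalizedFactors_eq_normalizedFactors hA.ne_zero hB.ne_zero).2 <|
      Multiset.ext.2 fun Q => ?_
  by_cases hQ : Q.Monic ∧ Irreducible Q
  · exact h ⟨Q, hQ⟩
  · have hA : Q ∉ normalizedFactors A := mt monic_and_irreducible_of_mem_normalizedFactors hQ
    have hB : Q ∉ normalizedFactors B := mt monic_and_irreducible_of_mem_normalizedFactors hQ
    rw [Multiset.count_eq_zero.2 hA, Multiset.count_eq_zero.2 hB]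

end Valuation

section Exponents

variable {K : Type} [Field K] {k : ℕ}

noncomputable def ofExponents (σ : MonicIrreducible K →₀ (Fin k → ℕ)) (i : Fin k) : K[X] :=
  ∏ P ∈ σ.support, P.1 ^ σ P i

theorem ofExponents_eq_prod (σ : MonicIrreducible K →₀ (Fin k → ℕ))
    {T : Finset (MonicIrreducible K)} (hT : σ.support ⊆ T) (i : Fin k) :
    ofExponents σ i = ∏ P ∈ T, P.1 ^ σ P i :=
  Finset.prod_subset hT fun P _ hP => by
    rw [Finsupp.notMem_support_iff.1 hP, Pi.zero_apply, pow_zero]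

theorem monic_ofExponents (σ : MonicIrreducible K →₀ (Fin k → ℕ)) (i : Fin k) :
    (ofExponents σ i).Monic :=
  monic_prod_of_monic _ _ fun P _ => P.2.1.pow _

variable [DecidableEq K]

open scoped Classical in
noncomputable def exponents (M : Fin k → K[X]) : MonicIrreducible K →₀ (Fin k → ℕ) :=
  Finsupp.onFinset (Finset.univ.biUnion fun i =>
      (normalizedFactors (M i)).toFinset.subtype fun Q => Q.Monic ∧ Irreducible Q)
    (fun P i => nuP K P.1 (M i)) fun P hP => by
      obtain ⟨i, hi⟩ := Function.ne_iff.1 hP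
      exact Finset.mem_biUnion.2 ⟨i, Finset.mem_univ _,
        Finset.mem_subtype.2 (Multiset.mem_toFinset.2 (Multiset.count_ne_zero.1 hi))⟩

theorem exponents_apply (M : Fin k → K[X]) (P : MonicIrreducible K) (i : Fin k) :
    exponents M P i = nuP K P.1 (M i) := rfl

theorem exponents_ofExponents (σ : MonicIrreducible K →₀ (Fin k → ℕ)) :
    exponents (ofExponents σ) = σ := by
  ext P i
  rw [exponents_apply, ofExponents, nuP_prod_pow]
  split_ifs with hP
  · rfl
  · rw [Finsupp.notMem_support_iff.1 hP, Pi.zero_apply]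

theorem ofExponents_exponents {M : Fin k → K[X]} (hM : ∀ i, (M i).Monic) :
    ofExponents (exponents M) = M := by
  funext i
  refine (monic_ofExponents _ i).eq_of_nuP_eq (hM i) fun P => ?_
  rw [← exponents_apply, exponents_ofExponents, exponents_apply]

noncomputable def monicTupleEquiv :
    {M : Fin k → K[X] // ∀ i, (M i).Monic} ≃ (MonicIrreducible K →₀ (Fin k → ℕ)) where
  toFun M := exponents M.1
  invFun σ := ⟨ofExponents σ, monic_ofExponents σ⟩
  left_inv M := Subtype.ext (ofExponents_exponents M.2)
  right_inv := exponents_ofExponents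

end Exponents

section Multiplicative

variable {K : Type} [Field K] {k : ℕ}

def IsTupleMultiplicative {M : Type*} [Mul M] (f : (Fin k → K[X]) → M) : Prop :=
  ∀ G H : Fin k → K[X], (∀ i, (G i).Monic) → (∀ i, (H i).Monic) →
    IsCoprime (∏ i, G i) (∏ i, H i) → f (fun i => G i * H i) = f G * f H

namespace IsTupleMultiplicative

theorem map_one {M : Type*} [MonoidWithZero M] [IsCancelMulZero M] {f : (Fin k → K[X]) → M}
    (hf : IsTupleMultiplicative f) (hne : ∃ G : Fin k → K[X], (∀ i, (G i).Monic) ∧ f G ≠ 0) :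
    f 1 = 1 := by
  obtain ⟨G, hG, hfG⟩ := hne
  have := hf G 1 hG (fun _ => monic_one) (by simp [isCoprime_one_right])
  simp only [Pi.one_apply, mul_one] at this
  exact mul_left_cancel₀ hfG (this.symm.trans (mul_one _).symm)

theorem div {M : Type*} [DivisionCommMonoid M] {f g : (Fin k → K[X]) → M}
    (hf : IsTupleMultiplicative f) (hg : IsTupleMultiplicative g) :
    IsTupleMultiplicative fun G => f G / g G := fun G H hG hH hGH => by
  simp only [hf G H hG hH hGH, hg G H hG hH hGH, mul_div_mul_comm]

theorem map_prod_pow {M : Type*} [CommMonoid M] {f : (Fin k → K[X]) → M}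
    (hf : IsTupleMultiplicative f) (h1 : f 1 = 1) (T : Finset (MonicIrreducible K))
    (e : MonicIrreducible K → Fin k → ℕ) :
    f (fun i => ∏ P ∈ T, P.1 ^ e P i) = ∏ P ∈ T, f fun i => P.1 ^ e P i := by
  induction T using Finset.cons_induction with
  | empty => simpa [Pi.one_def] using h1
  | cons P T hP ih =>
    simp only [Finset.prod_cons]
    rw [hf _ _ (fun _ => P.2.1.pow _) (fun _ => monic_prod_of_monic _ _ fun Q _ => Q.2.1.pow _),
      ih]
    refine IsCoprime.prod_left fun i _ => IsCoprime.prod_right fun j _ =>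
      IsCoprime.prod_right fun Q hQ => ?_
    exact (MonicIrreducible.isCoprime (ne_of_mem_of_not_mem hQ hP).symm).pow

end IsTupleMultiplicative

variable [Fintype K]

theorem anorm_pow (P : K[X]) (n : ℕ) : anorm K (P ^ n) = anorm K P ^ n := by
  rw [anorm, anorm, natDegree_pow, pow_mul']

theorem isTupleMultiplicative_prod_anorm :
    IsTupleMultiplicative fun G : Fin k → K[X] => ∏ i, (anorm K (G i) : ℂ) :=
  fun G H hG hH _ => by
  simp only [anorm, natDegree_mul (hG _).ne_zero (hH _).ne_zero, pow_add, Nat.cast_mul,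
    Finset.prod_mul_distrib]

end Multiplicative

section Mobius

variable {K : Type} [Field K] [DecidableEq K]

theorem mu_one : mu K 1 = 1 := by
  simp [mu, omega]

theorem omega_mul_of_isCoprime {A B : K[X]} (hA : A ≠ 0) (hB : B ≠ 0) (h : IsCoprime A B) :
    omega K (A * B) = omega K A + omega K B := by
  rw [omega, omega, omega, normalizedFactors_mul hA hB, Multiset.toFinset_add,
    Finset.card_union_of_disjoint]
  refine Finset.disjoint_left.2 fun Q hQA hQB => ?_
  rw [Multiset.mem_toFinset] at hQA hQB
  exact (irreducible_of_normalized_factor Q hQA).not_isUnit <|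
    h.isUnit_of_dvd' (dvd_of_mem_normalizedFactors hQA) (dvd_of_mem_normalizedFactors hQB)

theorem mu_mul_of_isCoprime {A B : K[X]} (hA : A ≠ 0) (hB : B ≠ 0) (h : IsCoprime A B) :
    mu K (A * B) = mu K A * mu K B := by
  rw [mu, mu, mu, squarefree_mul_iff, omega_mul_of_isCoprime hA hB h]
  by_cases hA' : Squarefree A <;> by_cases hB' : Squarefree B <;>
    simp [hA', hB', h.isRelPrime, pow_add]

end Mobius

section Convolution

variable {K : Type} [Field K] {k : ℕ}

theorem Polynomial.Monic.eq_of_mul_eq_mul_of_isCoprime {a b a' b' x y : K[X]} (ha : a.Monic)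
    (hb : b.Monic) (hax : a ∣ x) (hbx : b ∣ x) (ha'y : a' ∣ y) (hb'y : b' ∣ y) (hxy : IsCoprime x y)
    (h : a * a' = b * b') : a = b :=
  eq_of_monic_of_associated ha hb <| associated_of_dvd_dvd
    (((hxy.of_isCoprime_of_dvd_left hax).of_isCoprime_of_dvd_right hb'y).dvd_of_dvd_mul_right
      (h ▸ dvd_mul_right a a'))
    (((hxy.of_isCoprime_of_dvd_left hbx).of_isCoprime_of_dvd_right ha'y).dvd_of_dvd_mul_right
      (h ▸ dvd_mul_right b b'))

theorem exists_monic_dvd_dvd_of_dvd_mul [DecidableEq K] {D G G' : K[X]} (hD : D.Monic)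
    (h : D ∣ G * G') :
    ∃ d d', d.Monic ∧ d'.Monic ∧ d ∣ G ∧ d' ∣ G' ∧ d * d' = D := by
  obtain ⟨a, b, ha, hb, rfl⟩ := exists_dvd_and_dvd_of_dvd_mul h
  refine ⟨normalize a, normalize b, monic_normalize (left_ne_zero_of_mul hD.ne_zero),
    monic_normalize (right_ne_zero_of_mul hD.ne_zero), normalize_dvd_iff.2 ha,
    normalize_dvd_iff.2 hb, ?_⟩
  rw [← normalize_mul, hD.normalize_eq_self]

-- The index type of the sum defining `muConv`.
abbrev MonicFactorizations (G : Fin k → K[X]) :=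
  {DE : (Fin k → K[X]) × (Fin k → K[X]) //
    (∀ i, (DE.1 i).Monic) ∧ (∀ i, (DE.2 i).Monic) ∧ ∀ i, DE.1 i * DE.2 i = G i}

namespace MonicFactorizations

theorem ext_fst {G : Fin k → K[X]} {x y : MonicFactorizations G} (h : x.1.1 = y.1.1) : x = y :=
  Subtype.ext <| Prod.ext h <| funext fun i =>
    mul_left_cancel₀ (x.2.1 i).ne_zero <| by rw [x.2.2.2 i, h, y.2.2.2 i]

theorem finite {G : Fin k → K[X]} (hG : ∀ i, (G i).Monic) : Finite (MonicFactorizations G) := by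
  have := fun i => fintypeSubtypeMonicDvd (G i) (hG i).ne_zero
  refine Finite.of_injective (fun x i =>
    (⟨x.1.1 i, x.2.1 i, Dvd.intro _ (x.2.2.2 i)⟩ : {D // D.Monic ∧ D ∣ G i})) fun x y hxy => ?_
  exact ext_fst <| funext fun i => congrArg Subtype.val (congrFun hxy i)

noncomputable def mul {G G' : Fin k → K[X]} (x : MonicFactorizations G)
    (y : MonicFactorizations G') : MonicFactorizations fun i => G i * G' i :=
  ⟨(x.1.1 * y.1.1, x.1.2 * y.1.2), fun i => (x.2.1 i).mul (y.2.1 i),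
    fun i => (x.2.2.1 i).mul (y.2.2.1 i),
    fun i => by
      change x.1.1 i * y.1.1 i * (x.1.2 i * y.1.2 i) = G i * G' i
      rw [mul_mul_mul_comm, x.2.2.2 i, y.2.2.2 i]⟩

variable [DecidableEq K]

theorem bijective_mul {G G' : Fin k → K[X]} (hG : ∀ i, (G i).Monic) (hG' : ∀ i, (G' i).Monic)
    (hcop : ∀ i, IsCoprime (G i) (G' i)) :
    Function.Bijective fun x : MonicFactorizations G × MonicFactorizations G' => x.1.mul x.2 := by
  constructor
  · rintro ⟨x, y⟩ ⟨x', y'⟩ h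
    have h := fun i => congrFun (congrArg (fun z => z.1.1) h) i
    simp only [mul, Pi.mul_apply] at h
    have hx : x.1.1 = x'.1.1 := funext fun i =>
      Monic.eq_of_mul_eq_mul_of_isCoprime (x.2.1 i) (x'.2.1 i) (Dvd.intro _ (x.2.2.2 i))
        (Dvd.intro _ (x'.2.2.2 i)) (Dvd.intro _ (y.2.2.2 i)) (Dvd.intro _ (y'.2.2.2 i)) (hcop i)
        (h i)
    have hy : y.1.1 = y'.1.1 := funext fun i =>
      Monic.eq_of_mul_eq_mul_of_isCoprime (y.2.1 i) (y'.2.1 i) (Dvd.intro _ (y.2.2.2 i))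
        (Dvd.intro _ (y'.2.2.2 i)) (Dvd.intro _ (x.2.2.2 i)) (Dvd.intro _ (x'.2.2.2 i))
        (hcop i).symm (by rw [mul_comm, h i, mul_comm])
    rw [ext_fst hx, ext_fst hy]
  · intro z
    have hfac : ∀ i, ∃ d e d' e', d.Monic ∧ e.Monic ∧ d'.Monic ∧ e'.Monic ∧
        d * e = G i ∧ d' * e' = G' i ∧ d * d' = z.1.1 i := by
      intro i
      obtain ⟨d, d', hd, hd', ⟨e, he⟩, ⟨e', he'⟩, hdd'⟩ :=
        exists_monic_dvd_dvd_of_dvd_mul (z.2.1 i) (Dvd.intro _ (z.2.2.2 i))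
      exact ⟨d, e, d', e', hd, hd.of_mul_monic_left (he ▸ hG i), hd',
        hd'.of_mul_monic_left (he' ▸ hG' i), he.symm, he'.symm, hdd'⟩
    choose d e d' e' hd he hd' he' hde hde' hdd' using hfac
    exact ⟨(⟨(d, e), hd, he, hde⟩, ⟨(d', e'), hd', he', hde'⟩), ext_fst (funext hdd')⟩

end MonicFactorizations

variable [DecidableEq K]

theorem muConv_one (f : (Fin k → K[X]) → ℂ) : muConv K f 1 = f 1 := by
  have hunique : ∀ x : MonicFactorizations (1 : Fin k → K[X]), x.1 = (1, 1) := fun x =>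
    Prod.ext (funext fun i => (x.2.1 i).eq_one_of_isUnit (IsUnit.of_mul_eq_one _ (x.2.2.2 i)))
      (funext fun i => (x.2.2.1 i).eq_one_of_isUnit (IsUnit.of_mul_eq_one_right _ (x.2.2.2 i)))
  rw [muConv, tsum_eq_single ⟨(1, 1), fun _ => monic_one, fun _ => monic_one, fun _ => mul_one 1⟩
      fun x hx => absurd (Subtype.ext (hunique x)) hx]
  simp [mu_one]

theorem IsTupleMultiplicative.muConv {f : (Fin k → K[X]) → ℂ} (hf : IsTupleMultiplicative f) :
    IsTupleMultiplicative (muConv K f) := by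
  intro G G' hG hG' hcop
  have hco : ∀ {a b : K[X]} (i j : Fin k), a ∣ G i → b ∣ G' j → IsCoprime a b := fun i j ha hb =>
    (hcop.of_isCoprime_of_dvd_left (ha.trans (Finset.dvd_prod_of_mem G (Finset.mem_univ i)))
      ).of_isCoprime_of_dvd_right (hb.trans (Finset.dvd_prod_of_mem G' (Finset.mem_univ j)))
  have := MonicFactorizations.finite hG
  have := MonicFactorizations.finite hG'
  let e := Equiv.ofBijective _ <|
    MonicFactorizations.bijective_mul hG hG' fun i => hco i i dvd_rfl dvd_rfl
  rw [_root_.muConv, _root_.muConv, _root_.muConv,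
    tsum_mul_tsum_of_summable_norm .of_finite .of_finite, ← e.tsum_eq]
  refine tsum_congr fun ⟨x, y⟩ => ?_
  have hmu : ∀ i, (mu K (x.1.1 i * y.1.1 i) : ℂ) = mu K (x.1.1 i) * mu K (y.1.1 i) := fun i => by
    rw [mu_mul_of_isCoprime (x.2.1 i).ne_zero (y.2.1 i).ne_zero
      (hco i i (Dvd.intro _ (x.2.2.2 i)) (Dvd.intro _ (y.2.2.2 i))), Int.cast_mul]
  have hfxy : f (x.1.2 * y.1.2) = f x.1.2 * f y.1.2 := hf _ _ x.2.2.1 y.2.2.1 <|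
    IsCoprime.prod_left fun i _ => IsCoprime.prod_right fun j _ =>
      hco i j (Dvd.intro_left _ (x.2.2.2 i)) (Dvd.intro_left _ (y.2.2.2 j))
  simp only [e, Equiv.ofBijective_apply, MonicFactorizations.mul, Pi.mul_apply, hmu, hfxy,
    Finset.prod_mul_distrib]
  ring

end Convolution

section EulerProductMonic

variable {K : Type} [Field K] {k : ℕ}

theorem summable_norm_map_pow_add {R : Type*} [Norm R] {h : (Fin k → K[X]) → R}
    (hsum : Summable fun G : {G : Fin k → K[X] // ∀ i, (G i).Monic} => ‖h G.1‖)
    (P : MonicIrreducible K) (ν : Fin k → ℕ) :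
    Summable fun e : Fin k → ℕ => ‖h fun i => P.1 ^ (e + ν) i‖ := by
  have hinj : Function.Injective fun e : Fin k → ℕ =>
      (⟨fun i => P.1 ^ (e + ν) i, fun _ => P.2.1.pow _⟩ :
        {G : Fin k → K[X] // ∀ i, (G i).Monic}) :=
    fun e e' hee' => funext fun i => by
      have := congrArg natDegree (congrFun (congrArg Subtype.val hee') i)
      simp only [natDegree_pow, Pi.add_apply] at this
      have := Nat.eq_of_mul_eq_mul_right (Nat.pos_of_ne_zero P.natDegree_ne_zero) this
      omega
  exact hsum.comp_injective hinj

variable [DecidableEq K]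

theorem IsTupleMultiplicative.map_ofExponents_mul {M : Type*} [CommMonoid M]
    {h : (Fin k → K[X]) → M} (hh : IsTupleMultiplicative h) (h1 : h 1 = 1)
    {H : Fin k → K[X]} (hH : ∀ i, (H i).Monic) (σ : MonicIrreducible K →₀ (Fin k → ℕ)) :
    h (fun i => ofExponents σ i * H i) =
      ∏ P ∈ (exponents H).support ∪ σ.support, h fun i => P.1 ^ (σ P + exponents H P) i := by
  rw [← hh.map_prod_pow h1]
  congr 1
  funext i
  conv_lhs => rw [← ofExponents_exponents hH]
  rw [ofExponents_eq_prod σ Finset.subset_union_right,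
    ofExponents_eq_prod (exponents H) Finset.subset_union_left, ← Finset.prod_mul_distrib]
  simp only [Pi.add_apply, pow_add]

variable {R : Type*} [NormedField R] [CompleteSpace R] {h : (Fin k → K[X]) → R}

theorem summable_map_ofExponents_mul
    (hsum : Summable fun G : {G : Fin k → K[X] // ∀ i, (G i).Monic} => ‖h G.1‖)
    {H : Fin k → K[X]} (hH : ∀ i, (H i).Monic) :
    Summable fun σ : MonicIrreducible K →₀ (Fin k → ℕ) => h fun i => ofExponents σ i * H i := by
  have hinj : Function.Injective fun M : {M : Fin k → K[X] // ∀ i, (M i).Monic} =>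
      (⟨fun i => M.1 i * H i, fun i => (M.2 i).mul (hH i)⟩ :
        {G : Fin k → K[X] // ∀ i, (G i).Monic}) :=
    fun M M' hMM' => Subtype.ext <| funext fun i =>
      mul_right_cancel₀ (hH i).ne_zero (congrFun (congrArg Subtype.val hMM') i)
  exact (monicTupleEquiv.symm.summable_iff.2 (hsum.comp_injective hinj)).of_norm

theorem IsTupleMultiplicative.tsum_mul_eq_tprod (hh : IsTupleMultiplicative h) (h1 : h 1 = 1)
    (hsum : Summable fun G : {G : Fin k → K[X] // ∀ i, (G i).Monic} => ‖h G.1‖)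
    {H : Fin k → K[X]} (hH : ∀ i, (H i).Monic) :
    ∑' M : {M : Fin k → K[X] // ∀ i, (M i).Monic}, h (fun i => M.1 i * H i) =
      ∏' P : MonicIrreducible K,
        ∑' e : {e : Fin k → ℕ // ∀ i, nuP K P.1 (H i) ≤ e i}, h fun i => P.1 ^ e.1 i := by
  have hc0 : ∀ P ∉ (exponents H).support,
      (h fun i => P.1 ^ ((0 : Fin k → ℕ) + exponents H P) i) = 1 :=
    fun P hP => by simpa [Finsupp.notMem_support_iff.1 hP, Pi.one_def] using h1
  calc ∑' M : {M : Fin k → K[X] // ∀ i, (M i).Monic}, h (fun i => M.1 i * H i)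
      = ∑' σ, h fun i => ofExponents σ i * H i :=
        (monicTupleEquiv.symm.tsum_eq fun M => h fun i => M.1 i * H i).symm
    _ = ∑' σ : MonicIrreducible K →₀ (Fin k → ℕ), ∏ P ∈ (exponents H).support ∪ σ.support,
          h fun i => P.1 ^ (σ P + exponents H P) i :=
        tsum_congr (hh.map_ofExponents_mul h1 hH)
    _ = ∏' P : MonicIrreducible K, ∑' e, h fun i => P.1 ^ (e + exponents H P) i :=
        (hasProd_tsum_of_summable_finsupp hc0 (fun P => summable_norm_map_pow_add hsum P _)
          ((summable_map_ofExponents_mul hsum hH).congr (hh.map_ofExponents_mul h1 hH))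
          ).tprod_eq.symm
    _ = _ := tprod_congr fun P => (addRightEquivSubtypeLe _).tsum_eq
        (fun e => h fun i => P.1 ^ e.1 i)

end EulerProductMonic

theorem coefficient_euler_product (k : ℕ)
    (f : (Fin k → Polynomial F) → ℂ)
    (hne : ∃ G : Fin k → Polynomial F, (∀ i, (G i).Monic) ∧ f G ≠ 0)
    (hmul : ∀ G H : Fin k → Polynomial F, (∀ i, (G i).Monic) → (∀ i, (H i).Monic) →
      IsCoprime (∏ i, G i) (∏ i, H i) → f (fun i => G i * H i) = f G * f H)
    (hsum : Summable (fun G : {G : Fin k → Polynomial F // ∀ i, (G i).Monic} =>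
      ‖muConv F f G.1‖ / ∏ i, (anorm F (G.1 i) : ℝ)))
    (H : Fin k → Polynomial F) (hH : ∀ i, (H i).Monic) :
    (∑' M : {M : Fin k → Polynomial F // ∀ i, (M i).Monic},
        muConv F f (fun i => M.1 i * H i) / ∏ i, (anorm F (M.1 i * H i) : ℂ)) =
      ∏' P : {P : Polynomial F // P.Monic ∧ Irreducible P},
        ∑' e : {e : Fin k → ℕ // ∀ i, nuP F P.1 (H i) ≤ e i},
          muConv F f (fun i => P.1 ^ e.1 i) / (anorm F P.1 : ℂ) ^ (∑ i, e.1 i) := by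
  have hf : IsTupleMultiplicative f := hmul
  have hh := hf.muConv.div isTupleMultiplicative_prod_anorm
  have h1 : muConv F f 1 / ∏ i, (anorm F ((1 : Fin k → F[X]) i) : ℂ) = 1 := by
    simp [muConv_one, hf.map_one hne, anorm]
  have hsum' : Summable fun G : {G : Fin k → F[X] // ∀ i, (G i).Monic} =>
      ‖muConv F f G.1 / ∏ i, (anorm F (G.1 i) : ℂ)‖ := by
    simpa [norm_div, norm_prod] using hsum
  refine (hh.tsum_mul_eq_tprod h1 hsum' hH).trans (tprod_congr fun P => tsum_congr fun e => ?_)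
  simp only [anorm_pow, Nat.cast_pow, Finset.prod_pow_eq_pow_sum]
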